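/- Let u ≥ 1 be an integer with u ≡ 1 (mod p^{α+1}). Then there exists a unique Witt vector c ∈ 𝕎(A) such that for every n ≥ 0 one has [p]_{q^{p^{n+α}}} · (n-th ghost component of c) = q^{u·p^n} − q^{p^n} in A. (This is the ghost-component description of the element c_u of Proposition 3.19, which exhibits the isomorphism between ρ∘γ_u and ρ for u ∈ 1 + p^{α+1}ℤ_p.) -/

import Mathlib

open Finset

/-- The q-analogue `[n]_t = ∑_{i=0}^{n-1} t^i`. -/
def qan {A : Type*} [CommRing A] (t : A) (n : ℕ) : A := ∑ i ∈ Finset.range n, t ^ i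

/-- `A := W(k)⟦q−1⟧`; `q` denotes `1` plus the power series variable. -/
noncomputable def qq (p : ℕ) [Fact p.Prime] (k : Type*) [CommRing k] :
    PowerSeries (WittVector p k) :=
  1 + PowerSeries.X

/-!
With `T` the Teichmüller lift of `q` and `u = 1 + p^{α+1} v`, the Witt vector
`c = T (T^{p^α} - 1) [v]_{T^{p^{α+1}}}` has `n`-th ghost component
`s (s^{p^α} - 1) [v]_{s^{p^{α+1}}}` with `s = q^{p^n}`, and two geometric sums telescope
`[p]_{s^{p^α}} · s (s^{p^α} - 1) [v]_{s^{p^{α+1}}}` to `s^u - s`.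
Uniqueness holds because `[p]_{q^m}` has constant term `p ≠ 0` in the domain `W(k)⟦q-1⟧`,
and the ghost map of a ring without `p`-torsion is injective.
-/

theorem Nat.exists_eq_one_add_mul_of_modEq_one {u m : ℕ} (hm : 1 < m) (h : u ≡ 1 [MOD m]) :
    ∃ v, u = 1 + m * v := by
  refine ⟨u / m, ?_⟩
  have hdiv := Nat.div_add_mod u m
  rw [h, Nat.mod_eq_of_lt hm] at hdiv
  omega

section qan

variable {A B : Type*} [CommRing A] [CommRing B]

theorem map_qan (f : A →+* B) (t : A) (n : ℕ) : f (qan t n) = qan (f t) n := by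
  simp only [qan, map_sum, map_pow]

theorem qan_mul_sub_one (t : A) (n : ℕ) : qan t n * (t - 1) = t ^ n - 1 :=
  geom_sum_mul t n

theorem qan_pow_mul_mul_sub_one_mul_qan (s : A) (a b v : ℕ) :
    qan (s ^ a) b * (s * (s ^ a - 1) * qan (s ^ (a * b)) v) = s ^ (1 + a * b * v) - s := by
  calc qan (s ^ a) b * (s * (s ^ a - 1) * qan (s ^ (a * b)) v)
      = s * ((qan (s ^ a) b * (s ^ a - 1)) * qan (s ^ (a * b)) v) := by ring
    _ = s * (qan (s ^ (a * b)) v * (s ^ (a * b) - 1)) := by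
      rw [qan_mul_sub_one, pow_mul]
      ring
    _ = s ^ (1 + a * b * v) - s := by
      rw [qan_mul_sub_one, mul_sub, mul_one, ← pow_mul, ← pow_succ']
      ring_nf

end qan

namespace WittVector

variable {p : ℕ} [Fact p.Prime] {A : Type*} [CommRing A]

theorem ghostComponent_eq_sum (x : WittVector p A) (n : ℕ) :
    ghostComponent n x = ∑ i ∈ range (n + 1), (p : A) ^ i * x.coeff i ^ p ^ (n - i) := by
  rw [ghostComponent_apply, aeval_wittPolynomial]

theorem ext_ghostComponent (hp : IsLeftRegular (p : A)) {x y : WittVector p A}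
    (h : ∀ n, ghostComponent n x = ghostComponent n y) : x = y := by
  ext n
  induction n using Nat.strong_induction_on with
  | _ n ih =>
    have hn := h n
    rw [ghostComponent_eq_sum, ghostComponent_eq_sum, sum_range_succ, sum_range_succ,
      sum_congr rfl fun i hi => by rw [ih i (mem_range.mp hi)]] at hn
    simpa using hp.pow n (add_left_cancel hn)

variable (p) in
/-- The element `c_u` of the paper, for `u = 1 + p^{α+1} v`. -/
noncomputable def qDiff (q : A) (α v : ℕ) : WittVector p A :=
  teichmuller p q * (teichmuller p q ^ p ^ α - 1) * qan (teichmuller p q ^ (p ^ α * p)) v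

theorem ghostComponent_qDiff (q : A) (α v n : ℕ) :
    ghostComponent n (qDiff p q α v) =
      q ^ p ^ n * ((q ^ p ^ n) ^ p ^ α - 1) * qan ((q ^ p ^ n) ^ (p ^ α * p)) v := by
  simp only [qDiff, map_mul, map_sub, map_one, map_pow, map_qan, ghostComponent_teichmuller]

theorem qan_mul_ghostComponent_qDiff (q : A) (α v n : ℕ) :
    qan (q ^ p ^ (n + α)) p * ghostComponent n (qDiff p q α v) =
      q ^ ((1 + p ^ (α + 1) * v) * p ^ n) - q ^ p ^ n := by
  rw [ghostComponent_qDiff, pow_add, pow_mul, qan_pow_mul_mul_sub_one_mul_qan, ← pow_mul,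
    ← pow_succ]
  ring_nf

end WittVector

section qq

variable (p : ℕ) [Fact p.Prime] (k : Type*) [CommRing k] [Nontrivial k] [CharP k p]

theorem natCast_prime_ne_zero_powerSeries : (p : PowerSeries (WittVector p k)) ≠ 0 := fun h =>
  WittVector.p_nonzero p k <| by simpa using congrArg PowerSeries.constantCoeff h

theorem qan_qq_pow_ne_zero (m : ℕ) : qan (qq p k ^ m) p ≠ 0 := fun h =>
  WittVector.p_nonzero p k <| by
    simpa [qan, qq, map_sum] using congrArg PowerSeries.constantCoeff h

end qq

theorem stmt8 (p : ℕ) [Fact p.Prime] (α : ℕ)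
    (k : Type*) [Field k] [CharP k p]
    (u : ℕ) (hcong : u ≡ 1 [MOD p ^ (α + 1)]) :
    ∃! c : WittVector p (PowerSeries (WittVector p k)), ∀ n : ℕ,
      qan ((qq p k) ^ p ^ (n + α)) p * WittVector.ghostComponent n c =
        (qq p k) ^ (u * p ^ n) - (qq p k) ^ p ^ n := by
  obtain ⟨v, rfl⟩ := Nat.exists_eq_one_add_mul_of_modEq_one
    (Nat.one_lt_pow (Nat.succ_ne_zero α) (Fact.out : p.Prime).one_lt) hcong
  refine ⟨WittVector.qDiff p (qq p k) α v, WittVector.qan_mul_ghostComponent_qDiff _ α v,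
    fun c hc => WittVector.ext_ghostComponent ?_ fun n => ?_⟩
  · exact IsLeftCancelMulZero.mul_left_cancel_of_ne_zero (natCast_prime_ne_zero_powerSeries p k)
  · exact mul_left_cancel₀ (qan_qq_pow_ne_zero p k _)
      ((hc n).trans (WittVector.qan_mul_ghostComponent_qDiff _ α v n).symm)
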